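/- In the algebraic model on R^{2n} with α_i defined as before and 2-form ω = Σ_{j=1}^n e^{n+j} ∧ e^j, the interior product identity Σ_{q=1}^n e^q ∧ (e_{n+q} ⌟ α_i) = (i+1) α_{i+1} holds for every 0 ≤ i ≤ n−1 (and equals 0 for i = n). -/

import Mathlib

/-! The operator `∑_q e^q ∧ (e_{n+q} ⌟ ·)` is the derivation of the exterior algebra extending
the map `e^{n+q} ↦ e^q`, `e^q ↦ 0` on covectors. On the wedge product in the `σ`-term of `α_i` it
therefore replaces, one slot `j ≥ i` at a time, the factor `e^{n+σ(j)}` by `e^{σ(j)}`. Relabelling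
the slots by the transposition `(i j)` turns each of the `n - i` resulting signed sums over `S_n`
into the one defining `α_{i+1}`, and `(n - i) / (i! (n - i)!) = (i + 1) / ((i + 1)! (n - i - 1)!)`.
For `i = n` there is no slot left. -/

set_option synthInstance.maxHeartbeats 1000000
/-- The model for the dual basis covector `e^j` of `ℝ^m`, as a degree-one element of the
exterior algebra of the dual space. -/
noncomputable def eD (m : ℕ) (j : Fin m) :
    ExteriorAlgebra ℝ (Module.Dual ℝ (Fin m → ℝ)) :=
  ExteriorAlgebra.ι ℝ ((Pi.basisFun ℝ (Fin m)).coord j)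

/-- The Griffiths `n`-form
`α_i = (1/(i!(n-i)!)) ∑_{σ ∈ S_n} sgn(σ) e^{σ(1)} ∧ ⋯ ∧ e^{σ(i)} ∧ e^{n+σ(i+1)} ∧ ⋯ ∧ e^{n+σ(n)}`
on the `2n`-dimensional space `ℝ^{2n}` with basis `e_1, …, e_{2n}` (indexed here by `Fin (n+n)`,
the first block being `e_1, …, e_n` and the second block `e_{n+1}, …, e_{2n}`). -/
noncomputable def alphaG (n i : ℕ) : ExteriorAlgebra ℝ (Module.Dual ℝ (Fin (n + n) → ℝ)) :=
  ((i.factorial * (n - i).factorial : ℝ))⁻¹ •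
    ∑ σ : Equiv.Perm (Fin n), (((Equiv.Perm.sign σ : ℤ) : ℝ)) •
      (List.ofFn (fun k : Fin n =>
        if (k : ℕ) < i then eD (n + n) (Fin.castAdd n (σ k))
        else eD (n + n) (Fin.natAdd n (σ k)))).prod

/-- Interior product (contraction) by the basis vector `e_p` on the exterior algebra of forms. -/
noncomputable def iotaV (m : ℕ) (p : Fin m) :
    ExteriorAlgebra ℝ (Module.Dual ℝ (Fin m → ℝ)) →ₗ[ℝ]
      ExteriorAlgebra ℝ (Module.Dual ℝ (Fin m → ℝ)) :=
  CliffordAlgebra.contractLeft (Module.Dual.eval ℝ (Fin m → ℝ) (Pi.single p 1))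

open ExteriorAlgebra Equiv

namespace ExteriorAlgebra

variable {R M : Type*} [CommRing R] [AddCommGroup M] [Module R M]

theorem ι_mul_ιMulti {N : ℕ} (a : M) (v : Fin N → M) :
    ι R a * ιMulti R N v = ιMulti R (N + 1) (Fin.cons a v) := by
  rw [ιMulti_succ_apply, Fin.cons_zero]
  rfl

theorem contractLeft_ιMulti_succ (f : Module.Dual R M) {N : ℕ} (v : Fin (N + 1) → M) :
    CliffordAlgebra.contractLeft f (ιMulti R (N + 1) v) =
      ∑ j : Fin (N + 1), ((-1 : R) ^ (j : ℕ) * f (v j)) • ιMulti R N (j.removeNth v) := by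
  induction N with
  | zero =>
    rw [ιMulti_succ_apply, CliffordAlgebra.contractLeft_ι_mul]
    simp
  | succ N ih =>
    rw [ιMulti_succ_apply, CliffordAlgebra.contractLeft_ι_mul, ih, Fin.sum_univ_succ (n := N + 1),
      Finset.mul_sum, sub_eq_add_neg, ← Finset.sum_neg_distrib]
    congr 1
    · rw [Fin.val_zero, pow_zero, one_mul, Fin.removeNth_zero, Algebra.smul_def]
      rfl
    · refine Finset.sum_congr rfl fun j _ => ?_
      have hv : j.succ.removeNth v = Fin.cons (v 0) (j.removeNth (Fin.tail v)) := by
        rw [← Fin.cons_comp_succ_succAbove, Fin.cons_self_tail]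
        rfl
      rw [mul_smul_comm, ← neg_smul, Fin.val_succ, pow_succ, hv, ← ι_mul_ιMulti]
      congr 1
      simp only [Matrix.vecTail, Function.comp_apply]
      ring

theorem ι_mul_contractLeft_ιMulti (a : M) (f : Module.Dual R M) {N : ℕ} (v : Fin N → M) :
    ι R a * CliffordAlgebra.contractLeft f (ιMulti R N v) =
      ∑ j : Fin N, f (v j) • ιMulti R N (Function.update v j a) := by
  cases N with
  | zero => simp
  | succ N =>
    -- moving `a` from the front to slot `j` costs the same sign `(-1) ^ j` as the contraction
    rw [contractLeft_ιMulti_succ, Finset.mul_sum]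
    refine Finset.sum_congr rfl fun j _ => ?_
    rw [mul_smul_comm, ι_mul_ιMulti, ← Fin.insertNth_comp_cycleRange_symm, AlternatingMap.map_perm,
      Fin.insertNth_removeNth, Equiv.Perm.sign_symm, Fin.sign_cycleRange, Units.smul_def,
      ← Int.cast_smul_eq_zsmul R, smul_smul]
    congr 1
    push_cast
    rw [mul_comm, ← mul_assoc, ← mul_pow]
    simp

end ExteriorAlgebra

def mixedTuple {α : Type*} {n : ℕ} (x y : Fin n → α) (S : Finset (Fin n)) (σ : Perm (Fin n)) :
    Fin n → α :=
  fun k => if k ∈ S then x (σ k) else y (σ k)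

theorem mixedTuple_comp_perm {α : Type*} {n : ℕ} (x y : Fin n → α) (S : Finset (Fin n))
    (σ π : Perm (Fin n)) :
    mixedTuple x y (S.map π.toEmbedding) σ ∘ π = mixedTuple x y S (σ * π) := by
  funext k
  simp [mixedTuple]

theorem update_mixedTuple {α : Type*} {n : ℕ} (x y : Fin n → α) (S : Finset (Fin n))
    (σ : Perm (Fin n)) (j : Fin n) :
    Function.update (mixedTuple x y S σ) j (x (σ j)) = mixedTuple x y (insert j S) σ := by
  funext k
  by_cases hk : k = j
  · subst hk
    simp [mixedTuple]
  · simp [mixedTuple, hk]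

section MixedSum

variable {R M N : Type*} [CommRing R] [AddCommGroup M] [Module R M] [AddCommGroup N] [Module R N]
  {n : ℕ}

def mixedSum (f : M [⋀^Fin n]→ₗ[R] N) (x y : Fin n → M) (S : Finset (Fin n)) : N :=
  ∑ σ : Perm (Fin n), Perm.sign σ • f (mixedTuple x y S σ)

theorem mixedSum_map_perm (f : M [⋀^Fin n]→ₗ[R] N) (x y : Fin n → M) (S : Finset (Fin n))
    (π : Perm (Fin n)) : mixedSum f x y (S.map π.toEmbedding) = mixedSum f x y S := by
  refine Fintype.sum_equiv (Equiv.mulRight π) _ _ fun σ => ?_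
  rw [Equiv.coe_mulRight, ← mixedTuple_comp_perm, AlternatingMap.map_perm, smul_smul, map_mul,
    mul_assoc, Int.units_mul_self, mul_one]

end MixedSum

section WedgeContract

variable {R M : Type*} [CommRing R] [AddCommGroup M] [Module R M] {n : ℕ}

noncomputable def wedgeContract (x : Fin n → M) (g : Fin n → Module.Dual R M) :
    ExteriorAlgebra R M →ₗ[R] ExteriorAlgebra R M :=
  ∑ q, LinearMap.mulLeft R (ι R (x q)) ∘ₗ CliffordAlgebra.contractLeft (g q)

theorem wedgeContract_apply (x : Fin n → M) (g : Fin n → Module.Dual R M)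
    (a : ExteriorAlgebra R M) :
    wedgeContract x g a = ∑ q, ι R (x q) * CliffordAlgebra.contractLeft (g q) a := by
  simp [wedgeContract]

variable {x y : Fin n → M} {g : Fin n → Module.Dual R M}

theorem wedgeContract_ιMulti_mixedTuple (hx : ∀ p q, g q (x p) = 0)
    (hy : ∀ p q, g q (y p) = if p = q then 1 else 0) (S : Finset (Fin n)) (σ : Perm (Fin n)) :
    wedgeContract x g (ιMulti R n (mixedTuple x y S σ)) =
      ∑ j ∈ Sᶜ, ιMulti R n (mixedTuple x y (insert j S) σ) := by
  simp only [wedgeContract_apply, ι_mul_contractLeft_ιMulti]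
  rw [Finset.sum_comm, ← Finset.sum_add_sum_compl S, Finset.sum_eq_zero, zero_add]
  · refine Finset.sum_congr rfl fun j hj => ?_
    have hj' : mixedTuple x y S σ j = y (σ j) := if_neg (Finset.mem_compl.mp hj)
    rw [hj', Finset.sum_eq_single (σ j), hy, if_pos rfl, one_smul, update_mixedTuple]
    · intro q _ hq
      rw [hy, if_neg (Ne.symm hq), zero_smul]
    · simp
  · intro j hj
    have hj' : mixedTuple x y S σ j = x (σ j) := if_pos hj
    simp [hj', hx]

theorem wedgeContract_mixedSum (hx : ∀ p q, g q (x p) = 0)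
    (hy : ∀ p q, g q (y p) = if p = q then 1 else 0) (S : Finset (Fin n)) :
    wedgeContract x g (mixedSum (ιMulti R n) x y S) =
      ∑ j ∈ Sᶜ, mixedSum (ιMulti R n) x y (insert j S) := by
  simp only [mixedSum, map_sum, map_zsmul_unit, wedgeContract_ιMulti_mixedTuple hx hy,
    Finset.smul_sum]
  exact Finset.sum_comm

end WedgeContract

def initSeg (n i : ℕ) : Finset (Fin n) := {k | (k : ℕ) < i}

theorem card_compl_initSeg {n i : ℕ} (hi : i ≤ n) : (initSeg n i)ᶜ.card = n - i := by
  rw [Finset.card_compl, initSeg, Fin.card_filter_val_lt, Fintype.card_fin, min_eq_right hi]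

theorem initSeg_self (n : ℕ) : initSeg n n = Finset.univ := by
  ext k
  simp [initSeg]

theorem insert_initSeg {n i : ℕ} (hi : i < n) {j : Fin n} (hj : j ∉ initSeg n i) :
    insert j (initSeg n i) = (initSeg n (i + 1)).map (swap ⟨i, hi⟩ j).toEmbedding := by
  simp only [initSeg, Finset.mem_filter, Finset.mem_univ, true_and, not_lt] at hj
  ext k
  simp only [initSeg, Finset.mem_insert, Finset.mem_filter, Finset.mem_univ, true_and,
    Finset.mem_map_equiv, Equiv.symm_swap, swap_apply_def, Fin.ext_iff]
  grind

section Model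

variable (n : ℕ)

noncomputable def lowerCovector (q : Fin n) : Module.Dual ℝ (Fin (n + n) → ℝ) :=
  (Pi.basisFun ℝ (Fin (n + n))).coord (Fin.castAdd n q)

noncomputable def upperCovector (q : Fin n) : Module.Dual ℝ (Fin (n + n) → ℝ) :=
  (Pi.basisFun ℝ (Fin (n + n))).coord (Fin.natAdd n q)

noncomputable def upperEval (q : Fin n) : Module.Dual ℝ (Module.Dual ℝ (Fin (n + n) → ℝ)) :=
  Module.Dual.eval ℝ _ (Pi.single (Fin.natAdd n q) 1)

theorem upperEval_lowerCovector (p q : Fin n) : upperEval n q (lowerCovector n p) = 0 := by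
  simp only [upperEval, lowerCovector, Module.Dual.eval_apply, Module.Basis.coord_apply,
    Pi.basisFun_repr, Pi.single_apply, Fin.ext_iff, Fin.val_castAdd, Fin.val_natAdd]
  exact if_neg (by omega)

theorem upperEval_upperCovector (p q : Fin n) :
    upperEval n q (upperCovector n p) = if p = q then 1 else 0 := by
  simp [upperEval, upperCovector, Pi.single_apply, Fin.ext_iff]

theorem alphaG_eq_mixedSum (i : ℕ) :
    alphaG n i = ((i.factorial * (n - i).factorial : ℝ))⁻¹ •
      mixedSum (ιMulti ℝ n) (lowerCovector n) (upperCovector n) (initSeg n i) := by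
  rw [alphaG, mixedSum]
  congr 1
  refine Finset.sum_congr rfl fun σ _ => ?_
  rw [Units.smul_def, ← Int.cast_smul_eq_zsmul ℝ, ιMulti_apply]
  congr 3
  funext k
  simp [mixedTuple, initSeg, eD, lowerCovector, upperCovector, apply_ite (ι ℝ)]

end Model

theorem inv_factorial_mul_sub_eq {n i : ℕ} (h : i < n) :
    ((i.factorial * (n - i).factorial : ℝ))⁻¹ * ((n - i : ℕ) : ℝ) =
      ((i : ℝ) + 1) * (((i + 1).factorial * (n - (i + 1)).factorial : ℝ))⁻¹ := by
  obtain ⟨k, rfl⟩ : ∃ k, n = i + 1 + k := ⟨n - (i + 1), by omega⟩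
  rw [show i + 1 + k - i = k + 1 by omega, show i + 1 + k - (i + 1) = k by omega,
    Nat.factorial_succ, Nat.factorial_succ]
  push_cast
  field_simp

/-- in the algebraic model on `ℝ^{2n}`, the interior product identity
`∑_{q=1}^n e^q ∧ (e_{n+q} ⌟ α_i) = (i+1) α_{i+1}` holds for every `0 ≤ i ≤ n-1`, and the
left-hand side vanishes for `i = n`. -/
theorem stmt17 (n : ℕ) :
    (∀ i : ℕ, i < n →
      ∑ q : Fin n, eD (n + n) (Fin.castAdd n q) *
          iotaV (n + n) (Fin.natAdd n q) (alphaG n i) =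
        ((i : ℝ) + 1) • alphaG n (i + 1)) ∧
    (∑ q : Fin n, eD (n + n) (Fin.castAdd n q) *
        iotaV (n + n) (Fin.natAdd n q) (alphaG n n) = 0) := by
  have hlhs : ∀ i, ∑ q : Fin n, eD (n + n) (Fin.castAdd n q) *
      iotaV (n + n) (Fin.natAdd n q) (alphaG n i) =
        ((i.factorial * (n - i).factorial : ℝ))⁻¹ •
          ∑ j ∈ (initSeg n i)ᶜ, mixedSum (ιMulti ℝ n) (lowerCovector n) (upperCovector n)
            (insert j (initSeg n i)) := fun i => by
    rw [← wedgeContract_mixedSum (upperEval_lowerCovector n) (upperEval_upperCovector n),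
      ← map_smul, ← alphaG_eq_mixedSum, wedgeContract_apply]
    rfl
  refine ⟨fun i hi => ?_, ?_⟩
  · rw [hlhs, Finset.sum_congr rfl fun j hj => by
      rw [insert_initSeg hi (Finset.mem_compl.mp hj), mixedSum_map_perm],
      Finset.sum_const, card_compl_initSeg hi.le, ← Nat.cast_smul_eq_nsmul ℝ, smul_smul,
      inv_factorial_mul_sub_eq hi, ← smul_smul, ← alphaG_eq_mixedSum]
  · rw [hlhs, initSeg_self, Finset.compl_univ, Finset.sum_empty, smul_zero]
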